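/- arXiv:2401.01236 — 9 statements merged into one kernel-verified Lean document; each statement's English description precedes it below -/
import Mathlib

section
/- Let (M_{z|x})_{x ∈ Fin m, z ∈ Fin d} be a family of d-outcome POVMs on ℂ^n, with d ≥ 2, n ≥ 1. Suppose that for every family of maps f_x : Fin d → Fin 2 such that for each x neither induced effect ∑_{z : f_x z = 0} M_{z|x} nor ∑_{z : f_x z = 1} M_{z|x} equals the identity matrix, the induced family of binary POVMs (∑_{z : f_x z = z̃} M_{z|x})_{x, z̃} is incompatible. Then for every k ≥ 2 and every family of maps g_x : Fin d → Fin k such that for each x no induced effect ∑_{z : g_x z = z̃} M_{z|x} equals the identity matrix, the induced family of k-outcome POVMs is incompatible. (That is, 2-incompatibility with respect to coarse-graining implies k-incompatibility with respect to coarse-graining for every k ≥ 2, so fully incompatible is equivalent to 2-incompatible.) -/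
open Matrix Finset
open scoped ComplexOrder

noncomputable section

/-- A `d`-outcome POVM on `ℂ^n`: positive semidefinite effects summing to the identity. -/
def IsPOVM {n d : ℕ} (M : Fin d → Matrix (Fin n) (Fin n) ℂ) : Prop :=
  (∀ z, (M z).PosSemidef) ∧ ∑ z, M z = 1

/-- Coarse-graining of a `d`-outcome POVM along `f : Fin d → Fin k`. -/
def coarseGrain {n d k : ℕ} (M : Fin d → Matrix (Fin n) (Fin n) ℂ) (f : Fin d → Fin k)
    (z' : Fin k) : Matrix (Fin n) (Fin n) ℂ :=
  ∑ z ∈ Finset.univ.filter (fun z => f z = z'), M z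

/-- Compatibility of a finite family of `d`-outcome POVMs: existence of a parent POVM
`G` together with classical post-processings `p`. -/
def Compatible {n m d : ℕ} (M : Fin m → Fin d → Matrix (Fin n) (Fin n) ℂ) : Prop :=
  ∃ (L : ℕ) (G : Fin L → Matrix (Fin n) (Fin n) ℂ) (p : Fin m → Fin d → Fin L → ℝ),
    (∀ l, (G l).PosSemidef) ∧ (∑ l, G l = 1) ∧
    (∀ x z l, 0 ≤ p x z l) ∧ (∀ x l, ∑ z, p x z l = 1) ∧
    (∀ x z, M x z = ∑ l, (p x z l : ℂ) • G l)

/-- Joint measurability of two POVMs via a joint parent POVM with marginals `A` and `B`. -/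
def JointlyMeasurable {n a b : ℕ} (A : Fin a → Matrix (Fin n) (Fin n) ℂ)
    (B : Fin b → Matrix (Fin n) (Fin n) ℂ) : Prop :=
  ∃ G : Fin a → Fin b → Matrix (Fin n) (Fin n) ℂ,
    (∀ i j, (G i j).PosSemidef) ∧ (∑ i, ∑ j, G i j = 1) ∧
    (∀ i, A i = ∑ j, G i j) ∧ (∀ j, B j = ∑ i, G i j)

/-- 2-incompatibility w.r.t. coarse-graining implies `k`-incompatibility w.r.t. coarse-graining
for every `k ≥ 2`; hence fully incompatible is equivalent to 2-incompatible. -/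
theorem two_incompatible_implies_k_incompatible
    {n m d : ℕ} (hd : 2 ≤ d) (hn : 1 ≤ n)
    (M : Fin m → Fin d → Matrix (Fin n) (Fin n) ℂ)
    (hPOVM : ∀ x, IsPOVM (M x))
    (h2 : ∀ f : Fin m → Fin d → Fin 2,
      (∀ x z', coarseGrain (M x) (f x) z' ≠ 1) →
      ¬ Compatible (fun x => coarseGrain (M x) (f x))) :
    ∀ k : ℕ, 2 ≤ k → ∀ g : Fin m → Fin d → Fin k,
      (∀ x z', coarseGrain (M x) (g x) z' ≠ 1) →
      ¬ Compatible (fun x => coarseGrain (M x) (g x)) := by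
  intro k hk g hg hcompat
  have hone : (1 : Matrix (Fin n) (Fin n) ℂ) ≠ 0 := by
    intro h
    have := congrFun (congrFun h ⟨0, hn⟩) ⟨0, hn⟩
    simp [Matrix.one_apply] at this
  have hsumN : ∀ x, ∑ z', coarseGrain (M x) (g x) z' = 1 := by
    intro x
    rw [← (hPOVM x).2]
    exact Finset.sum_fiberwise _ _ _
  have hwex : ∀ x, ∃ w : Fin k, coarseGrain (M x) (g x) w ≠ 0 := by
    intro x
    by_contra h
    push_neg at h
    have h1 := hsumN x
    simp only [h, Finset.sum_const_zero] at h1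
    exact hone h1.symm
  choose w hw using hwex
  set φ : Fin m → Fin k → Fin 2 := fun x z' => if z' = w x then 0 else 1 with hφ
  set f : Fin m → Fin d → Fin 2 := fun x z => φ x (g x z) with hf
  have hfilt : ∀ x b z, (f x z = b) ↔ (φ x (g x z) = b) := by intro x b z; rfl
  have key : ∀ x b, coarseGrain (M x) (f x) b
      = ∑ z' ∈ Finset.univ.filter (fun z' => φ x z' = b), coarseGrain (M x) (g x) z' := by
    intro x b
    unfold coarseGrain
    rw [Finset.sum_fiberwise_eq_sum_filter Finset.univ
      (Finset.univ.filter (fun z' => φ x z' = b)) (g x) (M x)]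
    congr 1
    ext z
    simp [hf]
  have hfilt0 : ∀ x, Finset.univ.filter (fun z' => φ x z' = (0 : Fin 2)) = {w x} := by
    intro x
    ext z'
    simp only [Finset.mem_filter, Finset.mem_univ, true_and, Finset.mem_singleton, hφ]
    by_cases h : z' = w x <;> simp [h]
  have key0 : ∀ x, coarseGrain (M x) (f x) 0 = coarseGrain (M x) (g x) (w x) := by
    intro x
    rw [key, hfilt0, Finset.sum_singleton]
  have hsumF : ∀ x, coarseGrain (M x) (f x) 0 + coarseGrain (M x) (f x) 1 = 1 := by
    intro x
    have := Finset.sum_fiberwise Finset.univ (f x) (M x)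
    rw [(hPOVM x).2] at this
    rw [← this, Fin.sum_univ_two]
    rfl
  have hnt : ∀ x (z' : Fin 2), coarseGrain (M x) (f x) z' ≠ 1 := by
    intro x z'
    have hz : z' = 0 ∨ z' = 1 := by omega
    rcases hz with rfl | rfl
    · rw [key0]; exact hg x (w x)
    · intro h1
      have h0 := hsumF x
      rw [h1] at h0
      have : coarseGrain (M x) (f x) 0 = 0 := by
        have := add_right_cancel (a := coarseGrain (M x) (f x) 0) (b := (1 : Matrix (Fin n) (Fin n) ℂ))
          (c := 0)
        apply this
        rw [h0, zero_add]
      rw [key0] at this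
      exact hw x this
  apply h2 f hnt
  obtain ⟨L, G, p, hGpos, hGsum, hp0, hp1, hM⟩ := hcompat
  refine ⟨L, G, fun x b l => ∑ z' ∈ Finset.univ.filter (fun z' => φ x z' = b), p x z' l,
    hGpos, hGsum, ?_, ?_, ?_⟩
  · intro x b l
    exact Finset.sum_nonneg fun z' _ => hp0 x z' l
  · intro x l
    rw [Finset.sum_fiberwise Finset.univ (φ x) (fun z' => p x z' l)]
    exact hp1 x l
  · intro x b
    simp only
    rw [key x b]
    calc ∑ z' ∈ Finset.univ.filter (fun z' => φ x z' = b), coarseGrain (M x) (g x) z'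
        = ∑ z' ∈ Finset.univ.filter (fun z' => φ x z' = b), ∑ l, (p x z' l : ℂ) • G l := by
          exact Finset.sum_congr rfl fun z' _ => hM x z'
      _ = ∑ l, ∑ z' ∈ Finset.univ.filter (fun z' => φ x z' = b), (p x z' l : ℂ) • G l :=
          Finset.sum_comm
      _ = ∑ l, ((↑(∑ z' ∈ Finset.univ.filter (fun z' => φ x z' = b), p x z' l) : ℂ)) • G l := by
          refine Finset.sum_congr rfl fun l _ => ?_
          rw [Complex.ofReal_sum, Finset.sum_smul]
end
end

section
/- Let P and Q be orthogonal projection matrices on ℂ^n. The two binary projective measurements {P, I−P} and {Q, I−Q} are jointly measurable if and only if P and Q commute, i.e. PQ = QP. -/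
open Matrix Finset
open scoped ComplexOrder

noncomputable section

/-
If `G` is a joint POVM for `{A i}` and `{B j}` with every `A i` a projection, then `0 ≤ G i j ≤ A i`
and, for `k ≠ i`, `0 ≤ G k j ≤ A k ≤ 1 - A i`. An effect below a projection is absorbed by it,
and one below its complement is annihilated, so `A i * B j = G i j = B j * A i`. Conversely,
commuting POVMs have the joint POVM `G i j = A i * B j`, positive because commuting positive
matrices have a positive product.
-/

-- The operator norm makes matrices a C⋆-algebra, so the C⋆-algebra order lemmas apply.
open scoped Matrix.Norms.L2Operator MatrixOrder

theorem IsStarProjection.mul_eq_zero_of_nonneg_of_le_one_sub {A : Type*} [CStarAlgebra A]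
    [PartialOrder A] [StarOrderedRing A] {a e : A} (he : IsStarProjection e) (ha : 0 ≤ a)
    (hae : a ≤ 1 - e) : a * e = 0 ∧ e * a = 0 := by
  obtain ⟨h₁, h₂⟩ := he.one_sub.mul_right_and_mul_left_of_nonneg_of_le ha hae
  rw [mul_sub, mul_one, sub_eq_self] at h₁
  rw [sub_mul, one_mul, sub_eq_self] at h₂
  exact ⟨h₁, h₂⟩

theorem le_sum_sub_of_ne {ι M : Type*} [Fintype ι] [AddCommGroup M] [PartialOrder M]
    [IsOrderedAddMonoid M] {f : ι → M} (hf : ∀ i, 0 ≤ f i) {i k : ι} (hik : i ≠ k) :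
    f i ≤ ∑ j, f j - f k := by
  classical
  rw [le_sub_iff_add_le, ← sum_pair hik]
  exact sum_le_sum_of_subset_of_nonneg (subset_univ _) fun j _ _ => hf j

section JointlyMeasurable

variable {n a b : ℕ} {A : Fin a → Matrix (Fin n) (Fin n) ℂ} {B : Fin b → Matrix (Fin n) (Fin n) ℂ}

theorem JointlyMeasurable.commute_of_isStarProjection (h : JointlyMeasurable A B)
    (hA : ∀ i, IsStarProjection (A i)) (i : Fin a) (j : Fin b) : Commute (A i) (B j) := by
  obtain ⟨G, hG, hG_sum, hA_eq, hB_eq⟩ := h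
  have hG_nonneg (k : Fin a) (l : Fin b) : 0 ≤ G k l := (hG k l).nonneg
  have hA_nonneg (k : Fin a) : 0 ≤ A k := hA_eq k ▸ sum_nonneg fun l _ => hG_nonneg k l
  have hG_le (k : Fin a) : G k j ≤ A k :=
    hA_eq k ▸ single_le_sum (fun l _ => hG_nonneg k l) (mem_univ j)
  have hA_sum : ∑ k, A k = 1 := by simp_rw [hA_eq]; exact hG_sum
  have hdiag := (hA i).mul_right_and_mul_left_of_nonneg_of_le (hG_nonneg i j) (hG_le i)
  have hoff (k : Fin a) (hk : k ≠ i) : G k j * A i = 0 ∧ A i * G k j = 0 :=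
    (hA i).mul_eq_zero_of_nonneg_of_le_one_sub (hG_nonneg k j)
      ((hG_le k).trans (hA_sum ▸ le_sum_sub_of_ne hA_nonneg hk))
  rw [commute_iff_eq, hB_eq, mul_sum, sum_mul,
    sum_eq_single i (fun k _ hk => (hoff k hk).2) (by simp),
    sum_eq_single i (fun k _ hk => (hoff k hk).1) (by simp), hdiag.1, hdiag.2]

theorem JointlyMeasurable.of_commute (hA : IsPOVM A) (hB : IsPOVM B)
    (h : ∀ i j, Commute (A i) (B j)) : JointlyMeasurable A B := by
  refine ⟨fun i j => A i * B j, fun i j => ?_, ?_, fun i => ?_, fun j => ?_⟩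
  · exact ((h i j).mul_nonneg (hA.1 i).nonneg (hB.1 j).nonneg).posSemidef
  · rw [← sum_mul_sum, hA.2, hB.2, one_mul]
  · rw [← mul_sum, hB.2, mul_one]
  · rw [← sum_mul, hA.2, one_mul]

theorem jointlyMeasurable_iff_commute_of_isStarProjection (hA : IsPOVM A)
    (hA_proj : ∀ i, IsStarProjection (A i)) (hB : IsPOVM B) :
    JointlyMeasurable A B ↔ ∀ i j, Commute (A i) (B j) :=
  ⟨fun h => h.commute_of_isStarProjection hA_proj, JointlyMeasurable.of_commute hA hB⟩

end JointlyMeasurable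

theorem isPOVM_binary {n : ℕ} {P : Matrix (Fin n) (Fin n) ℂ} (hP : IsStarProjection P) :
    IsPOVM ![P, 1 - P] :=
  ⟨Fin.forall_fin_two.2 ⟨hP.nonneg.posSemidef, hP.one_sub.nonneg.posSemidef⟩,
    by simp [Fin.sum_univ_two]⟩

/-- Two binary projective measurements `{P, 1-P}` and `{Q, 1-Q}` are jointly measurable
if and only if the projections commute. -/
theorem binary_projective_jointlyMeasurable_iff_commute
    {n : ℕ} (P Q : Matrix (Fin n) (Fin n) ℂ)
    (hP : P.IsHermitian) (hP2 : P * P = P)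
    (hQ : Q.IsHermitian) (hQ2 : Q * Q = Q) :
    JointlyMeasurable ![P, 1 - P] ![Q, 1 - Q] ↔ P * Q = Q * P := by
  have hP_proj : IsStarProjection P := ⟨hP2, hP⟩
  have hQ_proj : IsStarProjection Q := ⟨hQ2, hQ⟩
  rw [jointlyMeasurable_iff_commute_of_isStarProjection (isPOVM_binary hP_proj)
    (Fin.forall_fin_two.2 ⟨hP_proj, hP_proj.one_sub⟩) (isPOVM_binary hQ_proj), ← commute_iff_eq]
  refine ⟨fun h => h 0 0, fun h => ?_⟩
  have h₁ : Commute P (1 - Q) := (Commute.one_right P).sub_right h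
  simp only [Fin.forall_fin_two]
  exact ⟨⟨h, h₁⟩, ⟨(Commute.one_left Q).sub_left h, (Commute.one_left _).sub_left h₁⟩⟩
end
end

section
/- Let (P_i)_{i ∈ Fin d} and (Q_j)_{j ∈ Fin d'} be two projective measurements on ℂ^n: families of nonzero orthogonal projections with P_i P_{i'} = 0 for i ≠ i', Q_j Q_{j'} = 0 for j ≠ j', ∑_i P_i = I and ∑_j Q_j = I, where d, d' ≥ 2. Then the following are equivalent: (1) for every pair of nontrivial coarse-grainings f : Fin d → Fin a and g : Fin d' → Fin b (a, b ≥ 2), the induced pair of coarse-grained POVMs is incompatible; (2) for every nonempty proper subset S ⊆ Fin d and every nonempty proper subset T ⊆ Fin d', the matrices ∑_{i∈S} P_i and ∑_{j∈T} Q_j do not commute. -/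
open Matrix Finset
open scoped ComplexOrder

noncomputable section

/-!
In a joint parent `G` of a projective measurement `E` and any POVM `B`, each `G i j` is a
positive element below the projection `E i`, hence `E i * G i j = G i j = G i j * E i`; with
orthogonality this gives `E i * B j = G i j = B j * E i`. Coarse-grainings of a projective
measurement are projective with fibre sums as effects, so a jointly measurable nontrivial pair
yields commuting sums over nonempty proper subsets. Conversely, if `P_S` and `Q_T` commute, the
two-outcome measurements `{P_S, 1 - P_S}` and `{Q_T, 1 - Q_T}` are jointly measured by the
products of their effects.
-/

section OrthogonalFamily

variable {ι R : Type*} [NonUnitalNonAssocSemiring R] {P : ι → R}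

theorem mul_sum_eq_zero_of_notMem (horth : ∀ i j, i ≠ j → P i * P j = 0) {S : Finset ι}
    {i : ι} (hi : i ∉ S) : P i * ∑ j ∈ S, P j = 0 := by
  rw [mul_sum]
  exact sum_eq_zero fun j hj => horth i j (ne_of_mem_of_not_mem hj hi).symm

theorem sum_mul_sum_eq_zero_of_disjoint (horth : ∀ i j, i ≠ j → P i * P j = 0)
    {S T : Finset ι} (hST : Disjoint S T) : (∑ i ∈ S, P i) * ∑ j ∈ T, P j = 0 := by
  rw [sum_mul]
  exact sum_eq_zero fun i hi => mul_sum_eq_zero_of_notMem horth (disjoint_left.mp hST hi)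

theorem isStarProjection_sum [StarRing R] [DecidableEq ι] (hP : ∀ i, IsStarProjection (P i))
    (horth : ∀ i j, i ≠ j → P i * P j = 0) (S : Finset ι) :
    IsStarProjection (∑ i ∈ S, P i) := by
  induction S using Finset.induction with
  | empty => simp [IsStarProjection.zero]
  | insert i S hi ih =>
    rw [sum_insert hi]
    exact (hP i).add ih (mul_sum_eq_zero_of_notMem horth hi)

end OrthogonalFamily

theorem sum_ne_one_of_ne_univ {ι R : Type*} [NonAssocSemiring R] [Fintype ι] {P : ι → R}
    (hne : ∀ i, P i ≠ 0) (horth : ∀ i j, i ≠ j → P i * P j = 0) {S : Finset ι}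
    (hS : S ≠ univ) : ∑ i ∈ S, P i ≠ 1 := by
  obtain ⟨i, hi⟩ : ∃ i, i ∉ S := by simpa [eq_univ_iff_forall] using hS
  intro h
  apply hne i
  rw [← mul_one (P i), ← h, mul_sum_eq_zero_of_notMem horth hi]

theorem commute_of_isStarProjection_of_sum_eq {A ι κ : Type*} [NonUnitalCStarAlgebra A]
    [PartialOrder A] [StarOrderedRing A] [Fintype ι] [Fintype κ] {e : ι → A} {b : κ → A}
    {G : ι → κ → A} (he : ∀ i, IsStarProjection (e i))
    (horth : ∀ i i', i ≠ i' → e i * e i' = 0) (hG : ∀ i j, 0 ≤ G i j)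
    (he_sum : ∀ i, e i = ∑ j, G i j) (hb_sum : ∀ j, b j = ∑ i, G i j) (i : ι) (j : κ) :
    Commute (e i) (b j) := by
  -- `0 ≤ G i j ≤ e i`, and a positive element below a projection is absorbed by it.
  have absorb : ∀ i j, G i j * e i = G i j ∧ e i * G i j = G i j := fun i j =>
    (he i).mul_right_and_mul_left_of_nonneg_of_le (hG i j)
      (he_sum i ▸ single_le_sum (fun j _ => hG i j) (mem_univ j))
  have left : e i * b j = G i j := by
    rw [hb_sum, mul_sum, sum_eq_single i (fun i' _ hi' => ?_) (by simp), (absorb i j).2]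
    rw [← (absorb i' j).2, ← mul_assoc, horth i i' hi'.symm, zero_mul]
  have right : b j * e i = G i j := by
    rw [hb_sum, sum_mul, sum_eq_single i (fun i' _ hi' => ?_) (by simp), (absorb i j).1]
    rw [← (absorb i' j).1, mul_assoc, horth i' i hi', mul_zero]
  exact left.trans right.symm

section CoarseGraining

variable {n d k : ℕ}

def binaryPartition {ι : Type*} [DecidableEq ι] (S : Finset ι) (i : ι) : Fin 2 :=
  if i ∈ S then 0 else 1

theorem coarseGrain_binaryPartition (M : Fin d → Matrix (Fin n) (Fin n) ℂ) (S : Finset (Fin d)) :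
    coarseGrain M (binaryPartition S) = ![∑ i ∈ S, M i, ∑ i ∈ Sᶜ, M i] := by
  ext1 z
  fin_cases z <;> simp [coarseGrain, binaryPartition, ← compl_filter]

theorem filter_ne_univ_of_coarseGrain_ne_one {M : Fin d → Matrix (Fin n) (Fin n) ℂ}
    (hsum : ∑ i, M i = 1) {f : Fin d → Fin k} {z : Fin k} (h : coarseGrain M f z ≠ 1) :
    univ.filter (f · = z) ≠ univ :=
  fun hz => h (by rw [coarseGrain, hz, hsum])

theorem coarseGrain_mul_coarseGrain_eq_zero {M : Fin d → Matrix (Fin n) (Fin n) ℂ}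
    (horth : ∀ i j, i ≠ j → M i * M j = 0) (f : Fin d → Fin k) {z z' : Fin k} (hz : z ≠ z') :
    coarseGrain M f z * coarseGrain M f z' = 0 :=
  sum_mul_sum_eq_zero_of_disjoint horth (disjoint_filter.2 fun _ _ h h' => hz (h ▸ h'))

end CoarseGraining

section JointMeasurability

open scoped Matrix.Norms.L2Operator MatrixOrder

variable {n a b : ℕ} {A : Fin a → Matrix (Fin n) (Fin n) ℂ} {B : Fin b → Matrix (Fin n) (Fin n) ℂ}

theorem JointlyMeasurable.commute (hAB : JointlyMeasurable A B)
    (hA : ∀ i, IsStarProjection (A i)) (horth : ∀ i i', i ≠ i' → A i * A i' = 0)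
    (i : Fin a) (j : Fin b) : Commute (A i) (B j) := by
  obtain ⟨G, hG, -, hGA, hGB⟩ := hAB
  exact commute_of_isStarProjection_of_sum_eq hA horth
    (fun i j => nonneg_iff_posSemidef.2 (hG i j)) hGA hGB i j

theorem jointlyMeasurable_of_commute (hA : ∀ i, IsStarProjection (A i))
    (hB : ∀ j, IsStarProjection (B j)) (hAsum : ∑ i, A i = 1) (hBsum : ∑ j, B j = 1)
    (hAB : ∀ i j, Commute (A i) (B j)) : JointlyMeasurable A B := by
  refine ⟨fun i j => A i * B j,
    fun i j => nonneg_iff_posSemidef.1 ((hA i).mul (hB j) (hAB i j)).nonneg, ?_, ?_, ?_⟩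
  · rw [← sum_mul_sum, hAsum, hBsum, one_mul]
  · intro i
    rw [← mul_sum, hBsum, mul_one]
  · intro j
    rw [← sum_mul, hAsum, one_mul]

end JointMeasurability

section BinaryCoarseGraining

variable {n d d' : ℕ} {P : Fin d → Matrix (Fin n) (Fin n) ℂ} {Q : Fin d' → Matrix (Fin n) (Fin n) ℂ}

theorem coarseGrain_binaryPartition_ne_one (hne : ∀ i, P i ≠ 0)
    (horth : ∀ i j, i ≠ j → P i * P j = 0) {S : Finset (Fin d)} (hS : S.Nonempty)
    (hSu : S ≠ univ) (z : Fin 2) : coarseGrain P (binaryPartition S) z ≠ 1 := by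
  rw [coarseGrain_binaryPartition]
  fin_cases z
  · exact sum_ne_one_of_ne_univ hne horth hSu
  · exact sum_ne_one_of_ne_univ hne horth ((compl_ne_univ_iff_nonempty S).2 hS)

theorem jointlyMeasurable_coarseGrain_binaryPartition (hP : ∀ i, IsStarProjection (P i))
    (hPorth : ∀ i j, i ≠ j → P i * P j = 0) (hPsum : ∑ i, P i = 1)
    (hQ : ∀ j, IsStarProjection (Q j)) (hQorth : ∀ i j, i ≠ j → Q i * Q j = 0)
    (hQsum : ∑ j, Q j = 1) {S : Finset (Fin d)} {T : Finset (Fin d')}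
    (hST : Commute (∑ i ∈ S, P i) (∑ j ∈ T, Q j)) :
    JointlyMeasurable (coarseGrain P (binaryPartition S)) (coarseGrain Q (binaryPartition T)) := by
  have hSc : ∑ i ∈ Sᶜ, P i = 1 - ∑ i ∈ S, P i :=
    eq_sub_of_add_eq (by rw [sum_compl_add_sum, hPsum])
  have hTc : ∑ j ∈ Tᶜ, Q j = 1 - ∑ j ∈ T, Q j :=
    eq_sub_of_add_eq (by rw [sum_compl_add_sum, hQsum])
  rw [coarseGrain_binaryPartition, coarseGrain_binaryPartition]
  refine jointlyMeasurable_of_commute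
    (Fin.forall_fin_two.2 ⟨isStarProjection_sum hP hPorth S, isStarProjection_sum hP hPorth Sᶜ⟩)
    (Fin.forall_fin_two.2 ⟨isStarProjection_sum hQ hQorth T, isStarProjection_sum hQ hQorth Tᶜ⟩)
    (by simp [hSc]) (by simp [hTc]) ?_
  simp only [Fin.forall_fin_two, Matrix.cons_val_zero, Matrix.cons_val_one, hSc, hTc]
  have hScT : Commute (1 - ∑ i ∈ S, P i) (∑ j ∈ T, Q j) := (Commute.one_left _).sub_left hST
  exact ⟨⟨hST, (Commute.one_right _).sub_right hST⟩, hScT, (Commute.one_right _).sub_right hScT⟩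

end BinaryCoarseGraining

theorem fully_incompatible_iff_no_commuting_subset_sums_general
    {n d d' : ℕ}
    (P : Fin d → Matrix (Fin n) (Fin n) ℂ)
    (Q : Fin d' → Matrix (Fin n) (Fin n) ℂ)
    (hPne : ∀ i, P i ≠ 0) (hPherm : ∀ i, (P i).IsHermitian)
    (hPidem : ∀ i, P i * P i = P i)
    (hPorth : ∀ i i', i ≠ i' → P i * P i' = 0)
    (hPsum : ∑ i, P i = 1)
    (hQne : ∀ j, Q j ≠ 0) (hQherm : ∀ j, (Q j).IsHermitian)
    (hQidem : ∀ j, Q j * Q j = Q j)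
    (hQorth : ∀ j j', j ≠ j' → Q j * Q j' = 0)
    (hQsum : ∑ j, Q j = 1) :
    (∀ a b : ℕ, 2 ≤ a → 2 ≤ b → ∀ (f : Fin d → Fin a) (g : Fin d' → Fin b),
        (∀ z', coarseGrain P f z' ≠ 1) → (∀ z', coarseGrain Q g z' ≠ 1) →
        ¬ JointlyMeasurable (coarseGrain P f) (coarseGrain Q g)) ↔
    (∀ (S : Finset (Fin d)) (T : Finset (Fin d')),
        S.Nonempty → S ≠ Finset.univ → T.Nonempty → T ≠ Finset.univ →
        (∑ i ∈ S, P i) * (∑ j ∈ T, Q j) ≠ (∑ j ∈ T, Q j) * (∑ i ∈ S, P i)) := by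
  have hP : ∀ i, IsStarProjection (P i) := fun i => ⟨hPidem i, hPherm i⟩
  have hQ : ∀ j, IsStarProjection (Q j) := fun j => ⟨hQidem j, hQherm j⟩
  constructor
  · intro hincomp S T hS hSu hT hTu hST
    exact hincomp 2 2 le_rfl le_rfl _ _ (coarseGrain_binaryPartition_ne_one hPne hPorth hS hSu)
      (coarseGrain_binaryPartition_ne_one hQne hQorth hT hTu)
      (jointlyMeasurable_coarseGrain_binaryPartition hP hPorth hPsum hQ hQorth hQsum hST)
  · intro hnocomm a b ha hb f g hf hg hfg
    obtain ⟨i, -, -⟩ := exists_of_ssubset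
      (ssubset_univ_iff.2 (filter_ne_univ_of_coarseGrain_ne_one hPsum (hf ⟨0, by omega⟩)))
    obtain ⟨j, -, -⟩ := exists_of_ssubset
      (ssubset_univ_iff.2 (filter_ne_univ_of_coarseGrain_ne_one hQsum (hg ⟨0, by omega⟩)))
    exact hnocomm _ _ ⟨i, by simp⟩ (filter_ne_univ_of_coarseGrain_ne_one hPsum (hf (f i)))
      ⟨j, by simp⟩ (filter_ne_univ_of_coarseGrain_ne_one hQsum (hg (g j)))
      (hfg.commute (fun z => isStarProjection_sum hP hPorth _)
        (fun _ _ => coarseGrain_mul_coarseGrain_eq_zero hPorth f) (f i) (g j)).eq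

/-- Two projective measurements are fully incompatible w.r.t. coarse-graining iff no pair of
subset-sums of their projections commutes (Result 2 of the paper). -/
theorem fully_incompatible_iff_no_commuting_subset_sums
    {n d d' : ℕ} (hd : 2 ≤ d) (hd' : 2 ≤ d')
    (P : Fin d → Matrix (Fin n) (Fin n) ℂ)
    (Q : Fin d' → Matrix (Fin n) (Fin n) ℂ)
    (hPne : ∀ i, P i ≠ 0) (hPherm : ∀ i, (P i).IsHermitian)
    (hPidem : ∀ i, P i * P i = P i)
    (hPorth : ∀ i i', i ≠ i' → P i * P i' = 0)
    (hPsum : ∑ i, P i = 1)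
    (hQne : ∀ j, Q j ≠ 0) (hQherm : ∀ j, (Q j).IsHermitian)
    (hQidem : ∀ j, Q j * Q j = Q j)
    (hQorth : ∀ j j', j ≠ j' → Q j * Q j' = 0)
    (hQsum : ∑ j, Q j = 1) :
    (∀ a b : ℕ, 2 ≤ a → 2 ≤ b → ∀ (f : Fin d → Fin a) (g : Fin d' → Fin b),
        (∀ z', coarseGrain P f z' ≠ 1) → (∀ z', coarseGrain Q g z' ≠ 1) →
        ¬ JointlyMeasurable (coarseGrain P f) (coarseGrain Q g)) ↔
    (∀ (S : Finset (Fin d)) (T : Finset (Fin d')),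
        S.Nonempty → S ≠ Finset.univ → T.Nonempty → T ≠ Finset.univ →
        (∑ i ∈ S, P i) * (∑ j ∈ T, Q j) ≠ (∑ j ∈ T, Q j) * (∑ i ∈ S, P i)) :=
  fully_incompatible_iff_no_commuting_subset_sums_general P Q hPne hPherm hPidem hPorth hPsum hQne
    hQherm hQidem hQorth hQsum
end
end

section
/- Let (ψ_i)_{i ∈ Fin d} and (φ_j)_{j ∈ Fin d} be two orthonormal bases of ℂ^d (d ≥ 2). If there exist indices i₀, j₀ with ⟨ψ_{i₀}, φ_{j₀}⟩ = 0, then the binary projective measurements {P_{ψ_{i₀}}, I − P_{ψ_{i₀}}} and {P_{φ_{j₀}}, I − P_{φ_{j₀}}} obtained by coarse-graining all outcomes other than i₀ (respectively j₀) are jointly measurable. Consequently, the condition ⟨ψ_i, φ_j⟩ ≠ 0 for all i, j is necessary for the two rank-one projective measurements to remain incompatible under all nontrivial coarse-grainings. -/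
/-!
Since `ψ i₀ ⊥ φ j₀`, the rank-one projections `P` and `Q` onto them satisfy `P * Q = 0`, so `P + Q`
is again a projection and `1 - P - Q ≥ 0`. The block family `[[0, P], [Q, 1 - P - Q]]` is then a
joint POVM with marginals `{P, 1 - P}` and `{Q, 1 - Q}`. These binary measurements are the
coarse-grainings "`i₀` versus the rest" of the two bases, and they are nontrivial because
`tr P = 1 < d`.
-/

open Matrix Finset
open scoped ComplexOrder

noncomputable section

section RankOne

variable {R n : Type*} [CommRing R] [StarRing R] [Fintype n]

theorem isStarProjection_vecMulVec_star {u : n → R} (hu : star u ⬝ᵥ u = 1) :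
    IsStarProjection (vecMulVec u (star u)) where
  isIdempotentElem := by
    rw [IsIdempotentElem, vecMulVec_mul_vecMulVec, hu, one_smul]
  isSelfAdjoint := by
    rw [IsSelfAdjoint, star_eq_conjTranspose, conjTranspose_vecMulVec, star_star]

theorem vecMulVec_star_mul_vecMulVec_star_of_orthogonal {u v : n → R} (huv : star u ⬝ᵥ v = 0) :
    vecMulVec u (star u) * vecMulVec v (star v) = 0 := by
  rw [vecMulVec_mul_vecMulVec, huv, zero_smul, vecMulVec_zero]

theorem sum_vecMulVec_star_eq_one [DecidableEq n] (ψ : n → n → R)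
    (hψ : ∀ i i', star (ψ i) ⬝ᵥ ψ i' = if i = i' then 1 else 0) :
    ∑ i, vecMulVec (ψ i) (star (ψ i)) = 1 := by
  have hrows : of ψ * (of ψ)ᴴ = 1 := by
    ext i i'
    simpa [mul_apply, one_apply, dotProduct, mul_comm, eq_comm] using hψ i' i
  have hcols : (of ψ)ᴴ * of ψ = 1 := mul_eq_one_comm.mp hrows
  ext a b
  simpa [mul_apply, one_apply, Matrix.sum_apply, vecMulVec_apply, mul_comm, eq_comm] using
    congr_fun₂ hcols b a

theorem trace_vecMulVec_star {u : n → R} (hu : star u ⬝ᵥ u = 1) :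
    (vecMulVec u (star u)).trace = 1 := by
  rw [trace_vecMulVec, dotProduct_comm, hu]

theorem vecMulVec_star_ne_zero [Nontrivial R] {u : n → R} (hu : star u ⬝ᵥ u = 1) :
    vecMulVec u (star u) ≠ 0 := fun h => by
  simpa [h] using trace_vecMulVec_star hu

theorem vecMulVec_star_ne_one [DecidableEq n] [CharZero R] (hn : 2 ≤ Fintype.card n) {u : n → R}
    (hu : star u ⬝ᵥ u = 1) : vecMulVec u (star u) ≠ 1 := fun h => by
  have := trace_vecMulVec_star hu
  rw [h, trace_one] at this
  exact absurd (Nat.cast_eq_one.mp this) (by omega)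

end RankOne

theorem jointlyMeasurable_of_posSemidef {n : ℕ} {P Q : Matrix (Fin n) (Fin n) ℂ}
    (hP : P.PosSemidef) (hQ : Q.PosSemidef) (hPQ : (1 - P - Q).PosSemidef) :
    JointlyMeasurable ![P, 1 - P] ![Q, 1 - Q] := by
  refine ⟨![![0, P], ![Q, 1 - P - Q]], ?_, ?_, ?_, ?_⟩
  · simp [Fin.forall_fin_two, PosSemidef.zero, hP, hQ, hPQ]
  · simp [Fin.sum_univ_two]
  · simp [Fin.forall_fin_two, Fin.sum_univ_two]
  · simp [Fin.forall_fin_two, Fin.sum_univ_two]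
    abel

open scoped MatrixOrder in
theorem jointlyMeasurable_of_isStarProjection {n : ℕ} {P Q : Matrix (Fin n) (Fin n) ℂ}
    (hP : IsStarProjection P) (hQ : IsStarProjection Q) (hPQ : P * Q = 0) :
    JointlyMeasurable ![P, 1 - P] ![Q, 1 - Q] := by
  refine jointlyMeasurable_of_posSemidef hP.nonneg.posSemidef hQ.nonneg.posSemidef ?_
  rw [sub_sub]
  exact (hP.add hQ hPQ).one_sub.nonneg.posSemidef

theorem coarseGrain_ite_eq {n d : ℕ} {M : Fin d → Matrix (Fin n) (Fin n) ℂ} (hM : ∑ z, M z = 1)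
    (z₀ : Fin d) : coarseGrain M (fun z => if z = z₀ then 0 else 1) = ![M z₀, 1 - M z₀] := by
  have hfilter : univ.filter (fun z => (if z = z₀ then 0 else 1 : Fin 2) = 1) = univ.erase z₀ := by
    ext z; by_cases h : z = z₀ <;> simp [h]
  refine funext (Fin.forall_fin_two.mpr ⟨?_, ?_⟩)
  · simp [coarseGrain, Finset.filter_eq']
  · simp only [coarseGrain, hfilter, Finset.sum_erase_eq_sub (mem_univ z₀), hM,
      cons_val_one, cons_val_zero]

theorem vecCons_one_sub_ne_one {α : Type*} [AddGroup α] [One α] {P : α} (h1 : P ≠ 1)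
    (h0 : P ≠ 0) (k : Fin 2) : ![P, 1 - P] k ≠ 1 := by
  fin_cases k
  · exact h1
  · simpa [sub_eq_self] using h0

/-- If two orthonormal bases of `ℂ^d` have a pair of orthogonal members `ψ i₀ ⊥ φ j₀`, then the
binary projective measurements obtained by coarse-graining all outcomes other than `i₀`
(resp. `j₀`) are jointly measurable; consequently the two rank-one projective measurements are
not fully incompatible w.r.t. coarse-graining, i.e. nonvanishing of all overlaps is necessary. -/
theorem orthogonal_overlap_gives_compatible_coarse_graining
    {d : ℕ} (hd : 2 ≤ d) (ψ φ : Fin d → Fin d → ℂ)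
    (hψ : ∀ i i', star (ψ i) ⬝ᵥ ψ i' = if i = i' then 1 else 0)
    (hφ : ∀ j j', star (φ j) ⬝ᵥ φ j' = if j = j' then 1 else 0)
    (i₀ j₀ : Fin d) (h0 : star (ψ i₀) ⬝ᵥ φ j₀ = 0) :
    JointlyMeasurable
      ![vecMulVec (ψ i₀) (star (ψ i₀)), 1 - vecMulVec (ψ i₀) (star (ψ i₀))]
      ![vecMulVec (φ j₀) (star (φ j₀)), 1 - vecMulVec (φ j₀) (star (φ j₀))] ∧
    ¬ (∀ a b : ℕ, 2 ≤ a → 2 ≤ b →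
        ∀ (f : Fin d → Fin a) (g : Fin d → Fin b),
        (∀ z', coarseGrain (fun i => vecMulVec (ψ i) (star (ψ i))) f z' ≠ 1) →
        (∀ z', coarseGrain (fun j => vecMulVec (φ j) (star (φ j))) g z' ≠ 1) →
        ¬ JointlyMeasurable
            (coarseGrain (fun i => vecMulVec (ψ i) (star (ψ i))) f)
            (coarseGrain (fun j => vecMulVec (φ j) (star (φ j))) g)) := by
  have hψ₀ : star (ψ i₀) ⬝ᵥ ψ i₀ = 1 := by simpa using hψ i₀ i₀
  have hφ₀ : star (φ j₀) ⬝ᵥ φ j₀ = 1 := by simpa using hφ j₀ j₀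
  have hJM := jointlyMeasurable_of_isStarProjection (isStarProjection_vecMulVec_star hψ₀)
    (isStarProjection_vecMulVec_star hφ₀) (vecMulVec_star_mul_vecMulVec_star_of_orthogonal h0)
  have hcard : 2 ≤ Fintype.card (Fin d) := by simpa using hd
  have hcgψ := coarseGrain_ite_eq (sum_vecMulVec_star_eq_one ψ hψ) i₀
  have hcgφ := coarseGrain_ite_eq (sum_vecMulVec_star_eq_one φ hφ) j₀
  refine ⟨hJM, fun H => H 2 2 le_rfl le_rfl _ _ ?_ ?_ (hcgψ ▸ hcgφ ▸ hJM)⟩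
  · rw [hcgψ]
    exact vecCons_one_sub_ne_one (vecMulVec_star_ne_one hcard hψ₀) (vecMulVec_star_ne_zero hψ₀)
  · rw [hcgφ]
    exact vecCons_one_sub_ne_one (vecMulVec_star_ne_one hcard hφ₀) (vecMulVec_star_ne_zero hφ₀)
end
end

section
/- In ℂ⁴ with standard basis e₀, e₁, e₂, e₃, define the orthonormal bases ψ₀ = (e₀+e₁)/√2, ψ₁ = (e₀−e₁)/√2, ψ₂ = (e₂+e₃)/√2, ψ₃ = (e₂−e₃)/√2 and φ₀ = (e₀+e₂)/√2, φ₁ = (e₀−e₂)/√2, φ₂ = (e₁+e₃)/√2, φ₃ = (e₁−e₃)/√2. Then: (1) ⟨ψ_i, φ_j⟩ ≠ 0 for all i, j ∈ {0,1,2,3}; and (2) the coarse-grained projections P_{ψ₀}+P_{ψ₁} and P_{φ₀}+P_{φ₁} commute, so the binary projective measurements obtained by coarse-graining outcomes {0,1} and {2,3} of each measurement are jointly measurable. Hence the nonvanishing of all mutual overlaps is not sufficient for two rank-one projective measurements in dimension ≥ 4 to remain incompatible under all nontrivial coarse-grainings. -/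
open Matrix Finset
open scoped ComplexOrder

noncomputable section

/-- `1/√2` as a complex number. -/
def invSqrt2 : ℂ := ((Real.sqrt 2 : ℝ) : ℂ)⁻¹

/-- The basis `ψ₀ = (e₀+e₁)/√2, ψ₁ = (e₀−e₁)/√2, ψ₂ = (e₂+e₃)/√2, ψ₃ = (e₂−e₃)/√2` of `ℂ⁴`. -/
def ψ : Fin 4 → Fin 4 → ℂ :=
  ![![invSqrt2, invSqrt2, 0, 0], ![invSqrt2, -invSqrt2, 0, 0],
    ![0, 0, invSqrt2, invSqrt2], ![0, 0, invSqrt2, -invSqrt2]]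

/-- The basis `φ₀ = (e₀+e₂)/√2, φ₁ = (e₀−e₂)/√2, φ₂ = (e₁+e₃)/√2, φ₃ = (e₁−e₃)/√2` of `ℂ⁴`. -/
def φ : Fin 4 → Fin 4 → ℂ :=
  ![![invSqrt2, 0, invSqrt2, 0], ![invSqrt2, 0, -invSqrt2, 0],
    ![0, invSqrt2, 0, invSqrt2], ![0, invSqrt2, 0, -invSqrt2]]

/-- Rank-one projection onto a vector. -/
def proj (u : Fin 4 → ℂ) : Matrix (Fin 4) (Fin 4) ℂ := vecMulVec u (star u)

/-!
All four coarse-grained projections are diagonal: by the parallelogram law for outer products,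
`P_{(x+y)/√2} + P_{(x-y)/√2} = P_x + P_y`, so e.g. `P_{ψ₀} + P_{ψ₁}` projects onto `span {e₀, e₁}`
and `P_{φ₀} + P_{φ₁}` onto `span {e₀, e₂}`. Diagonal POVMs are classical probability distributions
attached to each basis vector, and their pointwise products form a joint POVM. The overlaps
`⟨ψᵢ, φⱼ⟩` are all `±1/2`, since every `ψᵢ` and `φⱼ` share exactly one basis vector in their
supports.
-/

theorem vecMulVec_add_star_add_vecMulVec_sub_star_sub {n α : Type*} [Ring α] [StarRing α]
    (x y : n → α) :
    vecMulVec (x + y) (star (x + y)) + vecMulVec (x - y) (star (x - y))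
      = 2 • (vecMulVec x (star x) + vecMulVec y (star y)) := by
  simp only [star_add, star_sub, add_vecMulVec, vecMulVec_add, sub_vecMulVec, vecMulVec_sub]
  abel

theorem jointlyMeasurable_of_eq_diagonal {n a b : ℕ} {A : Fin a → Matrix (Fin n) (Fin n) ℂ}
    {B : Fin b → Matrix (Fin n) (Fin n) ℂ} (p : Fin a → Fin n → ℂ) (q : Fin b → Fin n → ℂ)
    (hA : ∀ i, A i = diagonal (p i)) (hB : ∀ j, B j = diagonal (q j))
    (hp : ∀ i k, 0 ≤ p i k) (hq : ∀ j k, 0 ≤ q j k) (hp₁ : ∑ i, p i = 1) (hq₁ : ∑ j, q j = 1) :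
    JointlyMeasurable A B := by
  have diagonal_sum {ι : Type} (s : Finset ι) (d : ι → Fin n → ℂ) :
      ∑ i ∈ s, diagonal (d i) = diagonal (∑ i ∈ s, d i) :=
    (map_sum (diagonalAddMonoidHom (Fin n) ℂ) d s).symm
  refine ⟨fun i j => diagonal (p i * q j), fun i j => ?_, ?_, fun i => ?_, fun j => ?_⟩
  · exact posSemidef_diagonal_iff.2 fun k => mul_nonneg (hp i k) (hq j k)
  · simp_rw [diagonal_sum, ← mul_sum, ← sum_mul, hp₁, hq₁, one_mul]
    exact diagonal_one
  · rw [hA, diagonal_sum, ← mul_sum, hq₁, mul_one]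
  · rw [hB, diagonal_sum, ← sum_mul, hp₁, one_mul]

lemma star_invSqrt2 : star invSqrt2 = invSqrt2 := by
  simp [invSqrt2, ← Complex.ofReal_inv]

lemma invSqrt2_mul_self : invSqrt2 * invSqrt2 = 2⁻¹ := by
  rw [invSqrt2, ← mul_inv, ← Complex.ofReal_mul, Real.mul_self_sqrt zero_le_two,
    Complex.ofReal_ofNat]

lemma invSqrt2_ne_zero : invSqrt2 ≠ 0 := by simp [invSqrt2]

lemma proj_smul (c : ℂ) (u : Fin 4 → ℂ) : proj (c • u) = (c * star c) • proj u := by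
  rw [proj, proj, star_smul, smul_vecMulVec, vecMulVec_smul, smul_smul]

lemma proj_single (k : Fin 4) : proj (Pi.single k 1) = diagonal (Pi.single k 1) := by
  rw [proj, diagonal_single, single_eq_single_vecMulVec_single, Pi.star_single, star_one]

lemma proj_add_add_proj_sub (x y : Fin 4 → ℂ) :
    proj (x + y) + proj (x - y) = (2 : ℂ) • (proj x + proj y) := by
  rw [proj, proj, vecMulVec_add_star_add_vecMulVec_sub_star_sub, two_nsmul, two_smul]
  rfl

lemma proj_add_proj_eq_diagonal {u v : Fin 4 → ℂ} (k l : Fin 4)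
    (hu : u = invSqrt2 • (Pi.single k 1 + Pi.single l 1))
    (hv : v = invSqrt2 • (Pi.single k 1 - Pi.single l 1)) :
    proj u + proj v = diagonal (Pi.single k 1 + Pi.single l 1) := by
  have h_norm : invSqrt2 * star invSqrt2 * 2 = 1 := by
    rw [star_invSqrt2, invSqrt2_mul_self, inv_mul_cancel₀ two_ne_zero]
  calc proj u + proj v
      = (invSqrt2 * star invSqrt2) • (2 : ℂ) •
          (proj (Pi.single k 1) + proj (Pi.single l 1)) := by
        rw [hu, hv, proj_smul, proj_smul, ← smul_add, proj_add_add_proj_sub]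
    _ = diagonal (Pi.single k 1 + Pi.single l 1) := by
        rw [smul_smul, h_norm, one_smul, proj_single, proj_single, diagonal_add]
        rfl

lemma proj_ψ_zero_add_proj_ψ_one :
    proj (ψ 0) + proj (ψ 1) = diagonal (Pi.single 0 1 + Pi.single 1 1) :=
  proj_add_proj_eq_diagonal 0 1 (by ext k; fin_cases k <;> simp [ψ])
    (by ext k; fin_cases k <;> simp [ψ])

lemma proj_ψ_two_add_proj_ψ_three :
    proj (ψ 2) + proj (ψ 3) = diagonal (Pi.single 2 1 + Pi.single 3 1) :=
  proj_add_proj_eq_diagonal 2 3 (by ext k; fin_cases k <;> simp [ψ])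
    (by ext k; fin_cases k <;> simp [ψ])

lemma proj_φ_zero_add_proj_φ_one :
    proj (φ 0) + proj (φ 1) = diagonal (Pi.single 0 1 + Pi.single 2 1) :=
  proj_add_proj_eq_diagonal 0 2 (by ext k; fin_cases k <;> simp [φ])
    (by ext k; fin_cases k <;> simp [φ])

lemma proj_φ_two_add_proj_φ_three :
    proj (φ 2) + proj (φ 3) = diagonal (Pi.single 1 1 + Pi.single 3 1) :=
  proj_add_proj_eq_diagonal 1 3 (by ext k; fin_cases k <;> simp [φ])
    (by ext k; fin_cases k <;> simp [φ])

lemma star_ψ_dotProduct_φ_ne_zero (i j : Fin 4) : star (ψ i) ⬝ᵥ φ j ≠ 0 := by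
  fin_cases i <;> fin_cases j <;>
    simp [ψ, φ, dotProduct, Fin.sum_univ_four, invSqrt2_ne_zero]

/-- For the two bases above all mutual overlaps are nonzero, yet the coarse-grained projections
`P_{ψ₀}+P_{ψ₁}` and `P_{φ₀}+P_{φ₁}` commute and the corresponding binary projective measurements
are jointly measurable: nonvanishing of all overlaps is not sufficient for full incompatibility
w.r.t. coarse-graining in dimension `≥ 4`. -/
theorem overlaps_nonzero_not_sufficient_dim_four :
    (∀ i j : Fin 4, star (ψ i) ⬝ᵥ φ j ≠ 0) ∧
    ((proj (ψ 0) + proj (ψ 1)) * (proj (φ 0) + proj (φ 1))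
      = (proj (φ 0) + proj (φ 1)) * (proj (ψ 0) + proj (ψ 1))) ∧
    JointlyMeasurable
      ![proj (ψ 0) + proj (ψ 1), proj (ψ 2) + proj (ψ 3)]
      ![proj (φ 0) + proj (φ 1), proj (φ 2) + proj (φ 3)] := by
  refine ⟨star_ψ_dotProduct_φ_ne_zero, ?_, ?_⟩
  · rw [proj_ψ_zero_add_proj_ψ_one, proj_φ_zero_add_proj_φ_one]
    exact (commute_diagonal _ _).eq
  refine jointlyMeasurable_of_eq_diagonal
    ![Pi.single 0 1 + Pi.single 1 1, Pi.single 2 1 + Pi.single 3 1]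
    ![Pi.single 0 1 + Pi.single 2 1, Pi.single 1 1 + Pi.single 3 1]
    (fun i => ?_) (fun j => ?_) (fun i k => ?_) (fun j k => ?_) ?_ ?_
  · fin_cases i
    exacts [proj_ψ_zero_add_proj_ψ_one, proj_ψ_two_add_proj_ψ_three]
  · fin_cases j
    exacts [proj_φ_zero_add_proj_φ_one, proj_φ_two_add_proj_φ_three]
  · fin_cases i <;> fin_cases k <;> simp
  · fin_cases j <;> fin_cases k <;> simp
  · ext k; fin_cases k <;> simp
  · ext k; fin_cases k <;> simp
end
end

section
/- Let n₀, n₁, n₂ ∈ ℝ³ with ‖n_i‖ ≤ 1 for each i, and suppose the three vectors lie in a common plane through the origin (i.e., there exists a nonzero w ∈ ℝ³ with ⟨w, n_i⟩ = 0 for all i). Then there exist a permutation (i,j,k) of (0,1,2) and q ∈ [0,1] such that ‖n_i + q n_j + (1−q) n_k‖ + ‖n_i − q n_j − (1−q) n_k‖ ≤ 2. -/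
/-!
Three vectors orthogonal to `w ≠ 0` in `ℝ³` are linearly dependent, say `α n₀ + β n₁ + γ n₂ = 0`,
and some two of the coefficients, say `β, γ`, have the same sign and a nonzero sum. Then
`q = β / (β + γ)` makes `b = q n₁ + (1 - q) n₂` a multiple of `n₀`, and `‖b‖ ≤ 1` by convexity of
the unit ball. For `b = t a` the sum `‖a + b‖ + ‖a - b‖` equals `(|1 + t| + |1 - t|) ‖a‖`, which is
`2 max ‖a‖ ‖b‖ ≤ 2`.
-/

open scoped RealInnerProductSpace

theorem abs_add_add_abs_sub {R : Type*} [CommRing R] [LinearOrder R] [IsStrictOrderedRing R]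
    (x y : R) : |x + y| + |x - y| = 2 * max |x| |y| := by
  rcases le_total |x| |y| with h | h
  · rw [max_eq_right h]
    cases abs_cases x <;> cases abs_cases y <;> cases abs_cases (x + y) <;>
      cases abs_cases (x - y) <;> linarith
  · rw [max_eq_left h]
    cases abs_cases x <;> cases abs_cases y <;> cases abs_cases (x + y) <;>
      cases abs_cases (x - y) <;> linarith

theorem norm_add_add_norm_sub_eq_of_eq_smul {E : Type*} [SeminormedAddCommGroup E]
    [NormedSpace ℝ E] {a b : E} {t : ℝ} (h : b = t • a) :
    ‖a + b‖ + ‖a - b‖ = 2 * max ‖a‖ ‖b‖ := by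
  have hplus : a + b = (1 + t) • a := by rw [h]; module
  have hminus : a - b = (1 - t) • a := by rw [h]; module
  rw [hplus, hminus, h, norm_smul, norm_smul, norm_smul, Real.norm_eq_abs, Real.norm_eq_abs,
    Real.norm_eq_abs, ← add_mul, abs_add_add_abs_sub, abs_one, mul_assoc,
    max_mul_of_nonneg _ _ (norm_nonneg a), one_mul]

theorem exists_mul_nonneg_add_ne_zero {R : Type*} [CommRing R] [LinearOrder R]
    [IsStrictOrderedRing R] {α β γ : R} (h : α ≠ 0 ∨ β ≠ 0 ∨ γ ≠ 0) :
    (0 ≤ β * γ ∧ β + γ ≠ 0) ∨ (0 ≤ α * γ ∧ α + γ ≠ 0) ∨ (0 ≤ α * β ∧ α + β ≠ 0) := by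
  have eq_zero_of_mul_nonneg {x y : R} (hxy : 0 ≤ x * y) (hsum : x + y = 0) :
      x = 0 ∧ y = 0 := by
    constructor <;> nlinarith
  by_contra! hfail
  obtain ⟨hβγ, hαγ, hαβ⟩ := hfail
  rcases le_or_gt 0 (β * γ) with h1 | h1
  · obtain ⟨rfl, rfl⟩ := eq_zero_of_mul_nonneg h1 (hβγ h1)
    simp_all
  rcases le_or_gt 0 (α * γ) with h2 | h2
  · obtain ⟨rfl, rfl⟩ := eq_zero_of_mul_nonneg h2 (hαγ h2)
    simp_all
  have h3 : 0 ≤ α * β := by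
    refine (pos_of_mul_pos_left (b := γ ^ 2) ?_ (sq_nonneg γ)).le
    linear_combination mul_pos_of_neg_of_neg h1 h2
  obtain ⟨rfl, rfl⟩ := eq_zero_of_mul_nonneg h3 (hαβ h3)
  simp at h1

theorem exists_convex_combination_eq_smul {𝕜 E : Type*} [Field 𝕜] [LinearOrder 𝕜]
    [IsStrictOrderedRing 𝕜] [AddCommGroup E] [Module 𝕜 E] {a b c : E} {α β γ : 𝕜}
    (hdep : α • a + β • b + γ • c = 0) (hβγ : 0 ≤ β * γ) (hsum : β + γ ≠ 0) :
    ∃ q ∈ Set.Icc (0 : 𝕜) 1, ∃ t : 𝕜, q • b + (1 - q) • c = t • a := by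
  have hq : β / (β + γ) = β * (β + γ) / (β + γ) ^ 2 := by field_simp
  refine ⟨β / (β + γ), ⟨?_, ?_⟩, -(α / (β + γ)), ?_⟩
  · rw [hq]; exact div_nonneg (by nlinarith) (sq_nonneg _)
  · rw [hq]; exact div_le_one_of_le₀ (by nlinarith) (sq_nonneg _)
  · have hβγ : β • b + γ • c = -(α • a) := by linear_combination (norm := module) hdep
    calc (β / (β + γ)) • b + (1 - β / (β + γ)) • c = (β + γ)⁻¹ • (β • b + γ • c) := by
          match_scalars <;> field_simp; ring
      _ = (-(α / (β + γ))) • a := by rw [hβγ]; module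

theorem norm_add_add_norm_sub_le_two_of_convex_combination_eq_smul {E : Type*}
    [SeminormedAddCommGroup E] [NormedSpace ℝ E] {a b c : E} (ha : ‖a‖ ≤ 1) (hb : ‖b‖ ≤ 1)
    (hc : ‖c‖ ≤ 1) {q t : ℝ} (hq : q ∈ Set.Icc (0 : ℝ) 1) (hpar : q • b + (1 - q) • c = t • a) :
    ‖a + q • b + (1 - q) • c‖ + ‖a - q • b - (1 - q) • c‖ ≤ 2 := by
  have hcomb : ‖q • b + (1 - q) • c‖ ≤ 1 := by
    simpa using convex_closedBall (0 : E) 1 (by simpa using hb) (by simpa using hc) hq.1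
      (sub_nonneg.mpr hq.2) (add_sub_cancel _ _)
  rw [add_assoc, sub_sub, norm_add_add_norm_sub_eq_of_eq_smul hpar]
  linarith [max_le ha hcomb]

theorem not_linearIndependent_of_forall_inner_eq_zero {E : Type*} [NormedAddCommGroup E]
    [InnerProductSpace ℝ E] [FiniteDimensional ℝ E] {ι : Type*} [Fintype ι] {v : ι → E} {w : E}
    (hw : w ≠ 0) (hperp : ∀ i, ⟪w, v i⟫ = 0) (hcard : Module.finrank ℝ E ≤ Fintype.card ι) :
    ¬ LinearIndependent ℝ v := by
  intro hv
  have hspan : Submodule.span ℝ (Set.range v) ≤ (ℝ ∙ w)ᗮ := by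
    rw [Submodule.span_le]
    rintro _ ⟨i, rfl⟩
    exact Submodule.mem_orthogonal_singleton_iff_inner_right.mpr (hperp i)
  have hcompl := Submodule.finrank_add_finrank_orthogonal (ℝ ∙ w)
  rw [finrank_span_singleton hw] at hcompl
  have := Submodule.finrank_mono hspan
  rw [linearIndependent_iff_card_eq_finrank_span.mp hv] at hcard
  unfold Set.finrank at hcard
  omega

/-- For three coplanar vectors of norm at most 1 in `ℝ³`, some permutation `(i,j,k)` and some
`q ∈ [0,1]` violate the Busch-type full-incompatibility criterion. -/
theorem coplanar_violates_busch_criterion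
    (n : Fin 3 → EuclideanSpace ℝ (Fin 3)) (hn : ∀ i, ‖n i‖ ≤ 1)
    (w : EuclideanSpace ℝ (Fin 3)) (hw : w ≠ 0) (hperp : ∀ i, ⟪w, n i⟫ = 0) :
    ∃ (i j k : Fin 3) (q : ℝ), i ≠ j ∧ j ≠ k ∧ i ≠ k ∧ q ∈ Set.Icc (0 : ℝ) 1 ∧
      ‖n i + q • n j + (1 - q) • n k‖ + ‖n i - q • n j - (1 - q) • n k‖ ≤ 2 := by
  obtain ⟨g, hsum, hg⟩ := Fintype.not_linearIndependent_iff.mp <|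
    not_linearIndependent_of_forall_inner_eq_zero hw hperp (by simp)
  rw [Fin.sum_univ_three] at hsum
  have hg_ne : g 0 ≠ 0 ∨ g 1 ≠ 0 ∨ g 2 ≠ 0 := by simpa [Fin.exists_fin_succ] using hg
  have witness {i j k : Fin 3} (hij : i ≠ j) (hjk : j ≠ k) (hik : i ≠ k)
      (hdep : g i • n i + g j • n j + g k • n k = 0) (hsign : 0 ≤ g j * g k)
      (hjk_sum : g j + g k ≠ 0) : ∃ (i j k : Fin 3) (q : ℝ), i ≠ j ∧ j ≠ k ∧ i ≠ k ∧
        q ∈ Set.Icc (0 : ℝ) 1 ∧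
        ‖n i + q • n j + (1 - q) • n k‖ + ‖n i - q • n j - (1 - q) • n k‖ ≤ 2 := by
    obtain ⟨q, hq, t, ht⟩ := exists_convex_combination_eq_smul hdep hsign hjk_sum
    exact ⟨i, j, k, q, hij, hjk, hik, hq,
      norm_add_add_norm_sub_le_two_of_convex_combination_eq_smul (hn i) (hn j) (hn k) hq ht⟩
  rcases exists_mul_nonneg_add_ne_zero hg_ne with ⟨h₁, h₂⟩ | ⟨h₁, h₂⟩ | ⟨h₁, h₂⟩
  · exact witness (i := 0) (j := 1) (k := 2) (by decide) (by decide) (by decide) hsum h₁ h₂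
  · exact witness (i := 1) (j := 0) (k := 2) (by decide) (by decide) (by decide)
      (by rw [← hsum]; abel) h₁ h₂
  · exact witness (i := 2) (j := 0) (k := 1) (by decide) (by decide) (by decide)
      (by rw [← hsum]; abel) h₁ h₂
end

section
/- Let u, v be unit vectors in ℂ^n (n ≥ 1), with rank-one projections P_u = |u⟩⟨u| and P_v = |v⟩⟨v|. Then the operator norm of I + P_u − P_v equals 1 + √(1 − |⟨u, v⟩|²). -/
open Matrix

noncomputable section

/-- The operator norm of a square complex matrix, viewed as an operator on Euclidean space
(for positive semidefinite matrices this is the largest eigenvalue). -/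
def opNorm {n : ℕ} (A : Matrix (Fin n) (Fin n) ℂ) : ℝ :=
  ‖Matrix.toEuclideanCLM (𝕜 := ℂ) A‖

/-! Write `D = P_u - P_v` and `k = 1 - |⟨u, v⟩|²`. A direct computation gives `D² u = k u` and
`D² v = k v`, hence `D³ = k D`. Since `D` is self-adjoint, the C⋆-identity turns this into
`‖D‖⁴ = ‖D⁴‖ = k ‖D‖²`, so `‖I + D‖ ≤ 1 + ‖D‖ ≤ 1 + √k`. Conversely `y = D u + √k u` satisfies
`D y = √k y`, so `y` is an eigenvector of `I + D` for `1 + √k`; if `y = 0`, then `k = 0` and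
`(I + D) u = u`. -/

open InnerProductSpace

theorem IsSelfAdjoint.norm_sq_le_of_cube_eq_smul {𝕜 A : Type*} [NormedField 𝕜]
    [NonUnitalNormedRing A] [StarRing A] [CStarRing A] [NormedSpace 𝕜 A]
    [IsScalarTower 𝕜 A A] {a : A} (ha : IsSelfAdjoint a) {r : 𝕜}
    (h : a * a * a = r • a) : ‖a‖ ^ 2 ≤ ‖r‖ := by
  have hsq : IsSelfAdjoint (a * a) := by
    simpa [ha.star_eq] using IsSelfAdjoint.star_mul_self a
  have h4 : a * a * (a * a) = r • (a * a) := by rw [← mul_assoc, h, smul_mul_assoc]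
  have key : ‖a * a‖ ^ 2 = ‖r‖ * ‖a * a‖ := by rw [← hsq.norm_mul_self, h4, norm_smul]
  rw [← ha.norm_mul_self]
  nlinarith [norm_nonneg (a * a), norm_nonneg r]

section

variable {𝕜 E : Type*} [RCLike 𝕜] [NormedAddCommGroup E] [InnerProductSpace 𝕜 E]

theorem one_sub_norm_inner_sq_nonneg {u v : E} (hu : ‖u‖ = 1) (hv : ‖v‖ = 1) :
    0 ≤ 1 - ‖⟪u, v⟫_𝕜‖ ^ 2 := by
  have := norm_inner_le_norm (𝕜 := 𝕜) u v
  rw [hu, hv, one_mul] at this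
  nlinarith [norm_nonneg ⟪u, v⟫_𝕜]

theorem rankOne_sub_rankOne_apply_apply_left {u v : E} (hu : ‖u‖ = 1) (hv : ‖v‖ = 1) :
    (rankOne 𝕜 u u - rankOne 𝕜 v v) ((rankOne 𝕜 u u - rankOne 𝕜 v v) u)
      = ((1 - ‖⟪u, v⟫_𝕜‖ ^ 2 : ℝ) : 𝕜) • u := by
  have huu := inner_self_eq_one_of_norm_eq_one (𝕜 := 𝕜) hu
  have hvv := inner_self_eq_one_of_norm_eq_one (𝕜 := 𝕜) hv
  have hvu : ⟪v, u⟫_𝕜 = starRingEnd 𝕜 ⟪u, v⟫_𝕜 := (inner_conj_symm _ _).symm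
  simp only [_root_.sub_apply, rankOne_apply, inner_sub_right, inner_smul_right,
    huu, hvv, hvu]
  rw [RCLike.ofReal_sub, RCLike.ofReal_pow, ← RCLike.mul_conj]
  module

theorem rankOne_sub_rankOne_apply_apply_right {u v : E} (hu : ‖u‖ = 1) (hv : ‖v‖ = 1) :
    (rankOne 𝕜 u u - rankOne 𝕜 v v) ((rankOne 𝕜 u u - rankOne 𝕜 v v) v)
      = ((1 - ‖⟪u, v⟫_𝕜‖ ^ 2 : ℝ) : 𝕜) • v := by
  have h := rankOne_sub_rankOne_apply_apply_left (𝕜 := 𝕜) hv hu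
  rwa [← neg_sub, _root_.neg_apply, _root_.neg_apply, map_neg, neg_neg,
    norm_inner_symm] at h

theorem rankOne_sub_rankOne_cube {u v : E} (hu : ‖u‖ = 1) (hv : ‖v‖ = 1) :
    (rankOne 𝕜 u u - rankOne 𝕜 v v) * (rankOne 𝕜 u u - rankOne 𝕜 v v) *
        (rankOne 𝕜 u u - rankOne 𝕜 v v)
      = ((1 - ‖⟪u, v⟫_𝕜‖ ^ 2 : ℝ) : 𝕜) • (rankOne 𝕜 u u - rankOne 𝕜 v v) := by
  ext x
  have hD : (rankOne 𝕜 u u - rankOne 𝕜 v v) x = ⟪u, x⟫_𝕜 • u - ⟪v, x⟫_𝕜 • v := rfl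
  rw [mul_apply_eq_comp, mul_apply_eq_comp, _root_.smul_apply, hD, map_sub, map_sub, map_smul,
    map_smul, map_smul, map_smul, rankOne_sub_rankOne_apply_apply_left hu hv,
    rankOne_sub_rankOne_apply_apply_right hu hv]
  module

theorem norm_rankOne_sub_rankOne_le [CompleteSpace E] {u v : E} (hu : ‖u‖ = 1) (hv : ‖v‖ = 1) :
    ‖rankOne 𝕜 u u - rankOne 𝕜 v v‖ ≤ √(1 - ‖⟪u, v⟫_𝕜‖ ^ 2) := by
  have hsa : IsSelfAdjoint (rankOne 𝕜 u u - rankOne 𝕜 v v) :=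
    (isPositive_rankOne_self u).isSelfAdjoint.sub (isPositive_rankOne_self v).isSelfAdjoint
  apply Real.le_sqrt_of_sq_le
  have := hsa.norm_sq_le_of_cube_eq_smul (rankOne_sub_rankOne_cube (𝕜 := 𝕜) hu hv)
  rwa [RCLike.norm_ofReal, abs_of_nonneg (one_sub_norm_inner_sq_nonneg hu hv)] at this

theorem inner_rankOne_sub_rankOne_apply_left {u v : E} (hu : ‖u‖ = 1) :
    ⟪u, (rankOne 𝕜 u u - rankOne 𝕜 v v) u⟫_𝕜 = ((1 - ‖⟪u, v⟫_𝕜‖ ^ 2 : ℝ) : 𝕜) := by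
  have huu := inner_self_eq_one_of_norm_eq_one (𝕜 := 𝕜) hu
  rw [_root_.sub_apply, rankOne_apply, rankOne_apply, inner_sub_right, inner_smul_right,
    inner_smul_right, huu, ← inner_conj_symm u v, RCLike.mul_conj, RCLike.norm_conj]
  push_cast
  ring

theorem ContinuousLinearMap.norm_le_opNorm_of_apply_eq_smul {T : E →L[𝕜] E} {x : E} {c : 𝕜}
    (hx : x ≠ 0) (h : T x = c • x) : ‖c‖ ≤ ‖T‖ := by
  have := T.le_opNorm x
  rw [h, norm_smul] at this
  exact le_of_mul_le_mul_right this (norm_pos_iff.2 hx)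

theorem le_norm_one_add_rankOne_sub_rankOne {u v : E} (hu : ‖u‖ = 1) (hv : ‖v‖ = 1) :
    1 + √(1 - ‖⟪u, v⟫_𝕜‖ ^ 2) ≤ ‖1 + (rankOne 𝕜 u u - rankOne 𝕜 v v)‖ := by
  set D := rankOne 𝕜 u u - rankOne 𝕜 v v
  set t := √(1 - ‖⟪u, v⟫_𝕜‖ ^ 2)
  have ht : 0 ≤ t := Real.sqrt_nonneg _
  have hDDu : D (D u) = ((t ^ 2 : ℝ) : 𝕜) • u := by
    rw [Real.sq_sqrt (one_sub_norm_inner_sq_nonneg hu hv)]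
    exact rankOne_sub_rankOne_apply_apply_left hu hv
  set y := D u + (t : 𝕜) • u
  have hDy : D y = (t : 𝕜) • y := by
    simp only [y, map_add, map_smul, hDDu, smul_add, smul_smul]
    push_cast
    module
  by_cases hy : y = 0
  · have hDu : D u = -(t : 𝕜) • u := by rw [neg_smul]; exact eq_neg_of_add_eq_zero_left hy
    have hkt : ((1 - ‖⟪u, v⟫_𝕜‖ ^ 2 : ℝ) : 𝕜) = ((-t : ℝ) : 𝕜) := by
      rw [← inner_rankOne_sub_rankOne_apply_left hu, hDu, inner_smul_right,
        inner_self_eq_one_of_norm_eq_one hu, mul_one, RCLike.ofReal_neg]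
    have ht0 : t = 0 := by
      have := Real.sq_sqrt (one_sub_norm_inner_sq_nonneg (𝕜 := 𝕜) hu hv)
      have := RCLike.ofReal_injective hkt
      nlinarith
    have hTu : (1 + D) u = (1 : 𝕜) • u := by
      rw [_root_.add_apply, hDu, ht0]
      simp
    have hu0 : u ≠ 0 := norm_ne_zero_iff.1 (by rw [hu]; exact one_ne_zero)
    simpa [ht0] using (1 + D).norm_le_opNorm_of_apply_eq_smul hu0 hTu
  · have hTy : (1 + D) y = ((1 + t : ℝ) : 𝕜) • y := by
      rw [_root_.add_apply, hDy, one_apply_eq_self, RCLike.ofReal_add,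
        RCLike.ofReal_one, add_smul, one_smul]
    have := (1 + D).norm_le_opNorm_of_apply_eq_smul hy hTy
    rwa [RCLike.norm_ofReal, abs_of_nonneg (by positivity)] at this

theorem norm_one_add_rankOne_sub_rankOne [CompleteSpace E] {u v : E} (hu : ‖u‖ = 1)
    (hv : ‖v‖ = 1) :
    ‖1 + rankOne 𝕜 u u - rankOne 𝕜 v v‖ = 1 + √(1 - ‖⟪u, v⟫_𝕜‖ ^ 2) := by
  rw [add_sub_assoc]
  refine le_antisymm ?_ (le_norm_one_add_rankOne_sub_rankOne hu hv)
  calc ‖1 + (rankOne 𝕜 u u - rankOne 𝕜 v v)‖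
      ≤ ‖(1 : E →L[𝕜] E)‖ + ‖rankOne 𝕜 u u - rankOne 𝕜 v v‖ := norm_add_le _ _
    _ ≤ 1 + √(1 - ‖⟪u, v⟫_𝕜‖ ^ 2) :=
      add_le_add ContinuousLinearMap.norm_id_le (norm_rankOne_sub_rankOne_le hu hv)

end

theorem Matrix.toEuclideanCLM_vecMulVec_star {𝕜 ι : Type*} [RCLike 𝕜] [Fintype ι]
    [DecidableEq ι] (x y : ι → 𝕜) :
    toEuclideanCLM (𝕜 := 𝕜) (vecMulVec x (star y))
      = rankOne 𝕜 (WithLp.toLp 2 x) (WithLp.toLp 2 y) := by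
  ext z
  simp [vecMulVec_mulVec, EuclideanSpace.inner_eq_star_dotProduct, dotProduct_comm, mul_comm]

theorem EuclideanSpace.norm_toLp_eq_one {𝕜 ι : Type*} [RCLike 𝕜] [Fintype ι] {x : ι → 𝕜}
    (hx : star x ⬝ᵥ x = 1) : ‖WithLp.toLp 2 x‖ = 1 := by
  have h := norm_sq_eq_re_inner (𝕜 := 𝕜) (WithLp.toLp 2 x)
  rw [EuclideanSpace.inner_toLp_toLp, dotProduct_comm, hx, RCLike.one_re] at h
  exact (pow_eq_one_iff_of_nonneg (norm_nonneg _) two_ne_zero).1 h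

theorem opNorm_one_add_proj_sub_proj_general
    {n : ℕ} (u v : Fin n → ℂ)
    (hu : star u ⬝ᵥ u = 1) (hv : star v ⬝ᵥ v = 1) :
    opNorm (1 + vecMulVec u (star u) - vecMulVec v (star v))
      = 1 + Real.sqrt (1 - ‖star u ⬝ᵥ v‖ ^ 2) := by
  rw [opNorm, map_sub, map_add, map_one, toEuclideanCLM_vecMulVec_star,
    toEuclideanCLM_vecMulVec_star,
    norm_one_add_rankOne_sub_rankOne (EuclideanSpace.norm_toLp_eq_one hu)
      (EuclideanSpace.norm_toLp_eq_one hv),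
    EuclideanSpace.inner_toLp_toLp, dotProduct_comm]

/-- For unit vectors `u, v ∈ ℂ^n`, the operator norm of `I + P_u − P_v` equals
`1 + √(1 − |⟨u, v⟩|²)`. -/
theorem opNorm_one_add_proj_sub_proj
    {n : ℕ} (hn : 1 ≤ n) (u v : Fin n → ℂ)
    (hu : star u ⬝ᵥ u = 1) (hv : star v ⬝ᵥ v = 1) :
    opNorm (1 + vecMulVec u (star u) - vecMulVec v (star v))
      = 1 + Real.sqrt (1 - ‖star u ⬝ᵥ v‖ ^ 2) :=
  opNorm_one_add_proj_sub_proj_general u v hu hv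
end
end

section
/- For all p ∈ [0,1], ν ∈ [0,1], and s ∈ {+1, −1}, the following identity of operator norms of 2×2 complex matrices holds: ∑_{j ∈ {0,1}} ∑_{k ∈ {0,1}} ‖ (1/2)(I + (−1)^j ν (p σ_x + s(1−p) σ_y)) + (1/2)(I + (−1)^k ν σ_z) ‖ = 4 + 2ν√(2p² − 2p + 2). Consequently, the maximum average success probability of the (2,2,2) random access code played with the disjoint-convex-mixture of the noisy σ_x and σ_y measurements (with weight p and either outcome pairing) against the noisy σ_z measurement equals (2 + ν√(2p² − 2p + 2))/4. -/
/-!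
Each of the four matrices is `1 + N` with `N = a σ_x + b σ_y + c σ_z` for the real Bloch vector
`(a, b, c) = (ν/2) ((-1)^j p, (-1)^j s (1 - p), (-1)^k)`, of length `r = (ν/2) √(2p² - 2p + 2)`.
Such an `N` is self-adjoint with `N² = r²`, so the C*-identity gives `‖N‖ = r`, hence
`‖1 + N‖ ≤ 1 + r`; conversely `(1 + N)(r + N) = (1 + r)(r + N)` and `r + N ≠ 0` (its trace is `2r`)
unless `r = 0`, so `‖1 + N‖ ≥ 1 + r`.
-/

open Matrix Finset

noncomputable section

/-- The Pauli matrix `σ_x`. -/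
def σx : Matrix (Fin 2) (Fin 2) ℂ := !![0, 1; 1, 0]

/-- The Pauli matrix `σ_y`. -/
def σy : Matrix (Fin 2) (Fin 2) ℂ := !![0, -Complex.I; Complex.I, 0]

/-- The Pauli matrix `σ_z`. -/
def σz : Matrix (Fin 2) (Fin 2) ℂ := !![1, 0; 0, -1]

open scoped Matrix.Norms.L2Operator

theorem opNorm_eq_norm {n : ℕ} (A : Matrix (Fin n) (Fin n) ℂ) : opNorm A = ‖A‖ := rfl

section NormedAlgebra

variable {𝕜 A : Type*} [NormedField 𝕜] [NormedRing A] [NormedAlgebra 𝕜 A]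

theorem norm_le_norm_of_mul_eq_smul {x y : A} {t : 𝕜} (h : x * y = t • y) (hy : y ≠ 0) :
    ‖t‖ ≤ ‖x‖ := by
  have hy' : 0 < ‖y‖ := norm_pos_iff.mpr hy
  refine le_of_mul_le_mul_right ?_ hy'
  calc ‖t‖ * ‖y‖ = ‖x * y‖ := by rw [h, norm_smul]
    _ ≤ ‖x‖ * ‖y‖ := norm_mul_le x y

end NormedAlgebra

section CStarRing

variable {𝕜 A : Type*} [RCLike 𝕜] [NormedRing A] [NormedAlgebra 𝕜 A] [StarRing A] [CStarRing A]
  [NormOneClass A]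

theorem IsSelfAdjoint.norm_eq_of_mul_self_eq {x : A} (hx : IsSelfAdjoint x) {r : ℝ} (hr : 0 ≤ r)
    (h : x * x = ((r ^ 2 : ℝ) : 𝕜) • 1) : ‖x‖ = r := by
  have hsq : ‖x‖ * ‖x‖ = r * r := by
    rw [← CStarRing.norm_star_mul_self, hx.star_eq, h, norm_smul, norm_one, mul_one,
      RCLike.norm_ofReal, abs_of_nonneg (by positivity), sq]
  exact (mul_self_inj (norm_nonneg x) hr).mp hsq

theorem IsSelfAdjoint.norm_one_add_eq_of_mul_self_eq {x : A} (hx : IsSelfAdjoint x) {r : ℝ}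
    (hr : 0 ≤ r) (h : x * x = ((r ^ 2 : ℝ) : 𝕜) • 1) (hne : (r : 𝕜) • 1 + x ≠ 0) :
    ‖1 + x‖ = 1 + r := by
  refine le_antisymm ?_ ?_
  · calc ‖1 + x‖ ≤ ‖(1 : A)‖ + ‖x‖ := norm_add_le 1 x
      _ = 1 + r := by rw [norm_one, hx.norm_eq_of_mul_self_eq hr h]
  · have heig : (1 + x) * ((r : 𝕜) • 1 + x) = ((1 + r : ℝ) : 𝕜) • ((r : 𝕜) • 1 + x) := by
      rw [mul_add, add_mul, add_mul, h, one_mul, one_mul, mul_smul_comm, mul_one]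
      push_cast
      module
    have hle := norm_le_norm_of_mul_eq_smul heig hne
    rwa [RCLike.norm_ofReal, abs_of_nonneg (by positivity)] at hle

end CStarRing

def pauliDot (a b c : ℝ) : Matrix (Fin 2) (Fin 2) ℂ := (a : ℂ) • σx + (b : ℂ) • σy + (c : ℂ) • σz

theorem isSelfAdjoint_pauliDot (a b c : ℝ) : IsSelfAdjoint (pauliDot a b c) := by
  ext i j
  fin_cases i <;> fin_cases j <;> simp [pauliDot, σx, σy, σz]

theorem pauliDot_mul_self (a b c : ℝ) :
    pauliDot a b c * pauliDot a b c = ((a ^ 2 + b ^ 2 + c ^ 2 : ℝ) : ℂ) • 1 := by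
  ext i j
  fin_cases i <;> fin_cases j <;>
    simp [pauliDot, σx, σy, σz, Matrix.mul_apply, Fin.sum_univ_two] <;> ring_nf <;>
    simp [Complex.I_sq]

theorem trace_pauliDot (a b c : ℝ) : (pauliDot a b c).trace = 0 := by
  simp [pauliDot, σx, σy, σz, Matrix.trace_fin_two]

theorem norm_one_add_pauliDot (a b c : ℝ) :
    ‖1 + pauliDot a b c‖ = 1 + √(a ^ 2 + b ^ 2 + c ^ 2) := by
  set r := √(a ^ 2 + b ^ 2 + c ^ 2)
  have hmul : pauliDot a b c * pauliDot a b c = ((r ^ 2 : ℝ) : ℂ) • 1 := by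
    rw [Real.sq_sqrt (by positivity), pauliDot_mul_self]
  by_cases hne : (r : ℂ) • 1 + pauliDot a b c = 0
  · have hr : r = 0 := by
      simpa [trace_pauliDot] using congrArg Matrix.trace hne
    rw [eq_neg_of_add_eq_zero_right hne, hr]
    simp
  · exact (isSelfAdjoint_pauliDot a b c).norm_one_add_eq_of_mul_self_eq (Real.sqrt_nonneg _)
      hmul hne

theorem half_smul_add_half_smul_eq_one_add_pauliDot (ν p q ε δ : ℝ) :
    (1/2 : ℂ) • (1 + (ε : ℂ) • ((ν : ℂ) • ((p : ℂ) • σx + (q : ℂ) • σy))) +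
        (1/2 : ℂ) • (1 + (δ : ℂ) • ((ν : ℂ) • σz)) =
      1 + pauliDot (ε * ν * p / 2) (ε * ν * q / 2) (δ * ν / 2) := by
  simp only [pauliDot]
  push_cast
  module

theorem rac_success_probability_identity_general
    (p ν : ℝ) (hν : ν ∈ Set.Icc (0 : ℝ) 1)
    (s : ℝ) (hs : s ∈ ({1, -1} : Set ℝ)) :
    ∑ j : Fin 2, ∑ k : Fin 2,
      opNorm ((1/2 : ℂ) • (1 + ((-1 : ℂ)) ^ (j : ℕ) •
          ((ν : ℂ) • ((p : ℂ) • σx + ((s * (1 - p) : ℝ) : ℂ) • σy))) +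
        (1/2 : ℂ) • (1 + ((-1 : ℂ)) ^ (k : ℕ) • ((ν : ℂ) • σz)))
      = 4 + 2 * ν * Real.sqrt (2 * p ^ 2 - 2 * p + 2) := by
  have hs2 : s ^ 2 = 1 := by rcases hs with rfl | rfl <;> norm_num
  have hsign : ∀ n : ℕ, (-1 : ℂ) ^ n = (((-1 : ℝ) ^ n : ℝ) : ℂ) := by simp
  have hsign_sq : ∀ n : ℕ, ((-1 : ℝ) ^ n) ^ 2 = 1 := fun n => by
    rw [← pow_mul, mul_comm, pow_mul, neg_one_sq, one_pow]
  have hlength : ∀ n m : ℕ,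
      √(((-1) ^ n * ν * p / 2) ^ 2 + ((-1) ^ n * ν * (s * (1 - p)) / 2) ^ 2 +
          ((-1) ^ m * ν / 2) ^ 2) = ν / 2 * √(2 * p ^ 2 - 2 * p + 2) := fun n m => by
    rw [← Real.sqrt_sq (by linarith [hν.1] : 0 ≤ ν / 2), ← Real.sqrt_mul (by positivity)]
    congr 1
    linear_combination (ν ^ 2 / 4 * (p ^ 2 + (s * (1 - p)) ^ 2)) * hsign_sq n +
      (ν ^ 2 / 4 * (1 - p) ^ 2) * hs2 + (ν ^ 2 / 4) * hsign_sq m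
  simp only [hsign, half_smul_add_half_smul_eq_one_add_pauliDot, opNorm_eq_norm,
    norm_one_add_pauliDot, hlength, sum_const, card_univ, Fintype.card_fin, nsmul_eq_mul]
  ring

/-- The success-probability identity for the `(2,2,2)` random access code played with the
disjoint-convex-mixture (weight `p`, outcome pairing `s`) of the noisy `σ_x` and `σ_y`
measurements against the noisy `σ_z` measurement. -/
theorem rac_success_probability_identity
    (p ν : ℝ) (hp : p ∈ Set.Icc (0 : ℝ) 1) (hν : ν ∈ Set.Icc (0 : ℝ) 1)
    (s : ℝ) (hs : s ∈ ({1, -1} : Set ℝ)) :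
    ∑ j : Fin 2, ∑ k : Fin 2,
      opNorm ((1/2 : ℂ) • (1 + ((-1 : ℂ)) ^ (j : ℕ) •
          ((ν : ℂ) • ((p : ℂ) • σx + ((s * (1 - p) : ℝ) : ℂ) • σy))) +
        (1/2 : ℂ) • (1 + ((-1 : ℂ)) ^ (k : ℕ) • ((ν : ℂ) • σz)))
      = 4 + 2 * ν * Real.sqrt (2 * p ^ 2 - 2 * p + 2) :=
  rac_success_probability_identity_general p ν hν s hs
end
end

section
/- Let ν ∈ [0,1]. Then ν > √(2/3) if and only if for every p ∈ [0,1], every permutation (A, B, C) of the Pauli matrices (σ_x, σ_y, σ_z), and every s ∈ {+1, −1}, one has ∑_{j ∈ {0,1}} ∑_{k ∈ {0,1}} ‖ (1/2)(I + (−1)^j ν (p A + s(1−p) B)) + (1/2)(I + (−1)^k ν C) ‖ > 6, where ‖·‖ is the operator norm on 2×2 complex matrices. (Equivalently: the three noisy Pauli measurements with equal noise are witnessed, via a quantum advantage exceeding 3/4 in the (2,2,2) random access code for every disjoint-convex-mixing, to be fully incompatible with respect to disjoint-convex-mixing if and only if ν > √(2/3).) -/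
open Matrix Finset

noncomputable section

/-- The triple of Pauli matrices. -/
def pauli : Fin 3 → Matrix (Fin 2) (Fin 2) ℂ := ![σx, σy, σz]

/-!
Each summand is `‖1 + n • σ⃗‖` for a Bloch vector `n` of squared length
`ν² (p² + (1 - p)² + 1) / 4`. A traceless Hermitian `N` with `N² = r² • 1` (such as `n • σ⃗`
with `r = |n|`) has `‖N‖ = r` by the C⋆-identity, and `N + r` is an eigenvector of `1 + N` for
the eigenvalue `1 + r`; hence `‖1 + N‖ = 1 + r`. The sum is therefore
`4 + 2 ν √(p² + (1 - p)² + 1)`, which exceeds `6` for every `p` iff it does at `p = 1/2`, i.e.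
iff `ν √(3/2) > 1`.
-/

section NormedAlgebra

variable {𝕜 A : Type*} [RCLike 𝕜] [NormedRing A] [NormedAlgebra 𝕜 A] [NormOneClass A]

lemma IsSelfAdjoint.norm_eq_of_mul_self_eq_s19 [StarRing A] [CStarRing A] {a : A}
    (ha : IsSelfAdjoint a) {r : ℝ} (hr : 0 ≤ r) (hsq : a * a = ((r ^ 2 : ℝ) : 𝕜) • 1) :
    ‖a‖ = r := by
  have h : ‖a‖ * ‖a‖ = r * r := by
    rw [← CStarRing.norm_star_mul_self, ha.star_eq, hsq, norm_smul, norm_one, mul_one,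
      RCLike.norm_ofReal, abs_of_nonneg (by positivity), sq]
  exact (mul_self_inj (norm_nonneg a) hr).mp h

lemma norm_one_add_eq_of_mul_self_eq {a : A} {r : ℝ} (hr : 0 ≤ r) (hnorm : ‖a‖ ≤ r)
    (hsq : a * a = ((r ^ 2 : ℝ) : 𝕜) • 1) (hne : a + (r : 𝕜) • 1 ≠ 0) :
    ‖1 + a‖ = 1 + r := by
  refine le_antisymm ((norm_add_le 1 a).trans (by rw [norm_one]; linarith)) ?_
  set P := a + (r : 𝕜) • 1
  have heig : (1 + a) * P = ((1 + r : ℝ) : 𝕜) • P := by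
    simp only [P, add_mul, mul_add, one_mul, mul_smul_comm, mul_one, hsq]
    push_cast
    module
  have hP : 0 < ‖P‖ := norm_pos_iff.mpr hne
  have h : (1 + r) * ‖P‖ ≤ ‖1 + a‖ * ‖P‖ := by
    calc (1 + r) * ‖P‖ = ‖(1 + a) * P‖ := by
          rw [heig, norm_smul, RCLike.norm_ofReal, abs_of_nonneg (by linarith)]
      _ ≤ ‖1 + a‖ * ‖P‖ := norm_mul_le _ _
  exact le_of_mul_le_mul_right h hP

end NormedAlgebra

lemma opNorm_one_add_of_isHermitian {n : ℕ} [NeZero n] {N : Matrix (Fin n) (Fin n) ℂ}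
    (hN : N.IsHermitian) (htr : N.trace = 0) {r : ℝ} (hr : 0 ≤ r)
    (hsq : N * N = ((r ^ 2 : ℝ) : ℂ) • 1) :
    opNorm (1 + N) = 1 + r := by
  set f := Matrix.toEuclideanCLM (𝕜 := ℂ) (n := Fin n)
  have hfsq : f N * f N = ((r ^ 2 : ℝ) : ℂ) • 1 := by
    rw [← map_mul, hsq, map_smul, map_one]
  have hnorm : ‖f N‖ = r := (hN.isSelfAdjoint.map f).norm_eq_of_mul_self_eq_s19 hr hfsq
  rw [opNorm, map_add, map_one]
  rcases hr.eq_or_lt with rfl | hpos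
  · rw [norm_eq_zero.mp hnorm, add_zero, norm_one, add_zero]
  · refine norm_one_add_eq_of_mul_self_eq hr hnorm.le hfsq ?_
    rw [← map_one f, ← map_smul, ← map_add, map_ne_zero_iff f f.injective]
    intro h
    have htr' := congrArg Matrix.trace h
    simp [htr, NeZero.ne n] at htr'
    exact hpos.ne' htr'

lemma pauli_mul_self (i : Fin 3) : pauli i * pauli i = 1 := by
  fin_cases i <;> simp [pauli, σx, σy, σz, Matrix.one_fin_two]

lemma pauli_anticomm {i j : Fin 3} (h : i ≠ j) :
    pauli i * pauli j + pauli j * pauli i = 0 := by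
  fin_cases i <;> fin_cases j <;>
    simp_all [pauli, σx, σy, σz, ← Matrix.ext_iff, Fin.forall_fin_two]

lemma pauli_isHermitian (i : Fin 3) : (pauli i).IsHermitian := by
  fin_cases i <;>
    simp [IsHermitian, pauli, σx, σy, σz, conjTranspose, ← Matrix.ext_iff, Fin.forall_fin_two]

lemma pauli_trace (i : Fin 3) : (pauli i).trace = 0 := by
  fin_cases i <;> simp [pauli, σx, σy, σz, Matrix.trace_fin_two]

section PauliCombination

variable (a b c : ℝ) {i j k : Fin 3}

lemma pauli_comb_mul_self (hij : i ≠ j) (hik : i ≠ k) (hjk : j ≠ k) :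
    ((a : ℂ) • pauli i + (b : ℂ) • pauli j + (c : ℂ) • pauli k) *
      ((a : ℂ) • pauli i + (b : ℂ) • pauli j + (c : ℂ) • pauli k) =
      ((a ^ 2 + b ^ 2 + c ^ 2 : ℝ) : ℂ) • 1 := by
  have hexp : ((a : ℂ) • pauli i + (b : ℂ) • pauli j + (c : ℂ) • pauli k) *
      ((a : ℂ) • pauli i + (b : ℂ) • pauli j + (c : ℂ) • pauli k) =
      ((a : ℂ) * a) • (pauli i * pauli i) + ((b : ℂ) * b) • (pauli j * pauli j)
        + ((c : ℂ) * c) • (pauli k * pauli k)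
        + ((a : ℂ) * b) • (pauli i * pauli j + pauli j * pauli i)
        + ((a : ℂ) * c) • (pauli i * pauli k + pauli k * pauli i)
        + ((b : ℂ) * c) • (pauli j * pauli k + pauli k * pauli j) := by
    simp only [add_mul, mul_add, smul_mul_assoc, mul_smul_comm, smul_smul, smul_add]
    module
  rw [hexp, pauli_mul_self, pauli_mul_self, pauli_mul_self, pauli_anticomm hij,
    pauli_anticomm hik, pauli_anticomm hjk]
  push_cast
  module

lemma opNorm_one_add_pauli_comb (hij : i ≠ j) (hik : i ≠ k) (hjk : j ≠ k) :
    opNorm (1 + ((a : ℂ) • pauli i + (b : ℂ) • pauli j + (c : ℂ) • pauli k)) =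
      1 + √(a ^ 2 + b ^ 2 + c ^ 2) := by
  have hherm (l : Fin 3) (x : ℝ) : ((x : ℂ) • pauli l).IsHermitian :=
    (pauli_isHermitian l).smul (by simp [IsSelfAdjoint])
  refine opNorm_one_add_of_isHermitian (((hherm i a).add (hherm j b)).add (hherm k c))
    (by simp only [Matrix.trace_add, Matrix.trace_smul, pauli_trace, smul_zero, add_zero])
    (Real.sqrt_nonneg _) ?_
  rw [Real.sq_sqrt (by positivity)]
  exact pauli_comb_mul_self a b c hij hik hjk

end PauliCombination

lemma opNorm_rac_term (ν p s : ℝ) (σ : Equiv.Perm (Fin 3)) (j k : ℕ) :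
    opNorm ((1/2 : ℂ) • (1 + ((-1 : ℂ)) ^ j •
        ((ν : ℂ) • ((p : ℂ) • pauli (σ 0) + ((s * (1 - p) : ℝ) : ℂ) • pauli (σ 1)))) +
      (1/2 : ℂ) • (1 + ((-1 : ℂ)) ^ k • ((ν : ℂ) • pauli (σ 2)))) =
      1 + √(ν ^ 2 * (p ^ 2 + (s * (1 - p)) ^ 2 + 1) / 4) := by
  have hmat : (1/2 : ℂ) • (1 + ((-1 : ℂ)) ^ j •
        ((ν : ℂ) • ((p : ℂ) • pauli (σ 0) + ((s * (1 - p) : ℝ) : ℂ) • pauli (σ 1)))) +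
      (1/2 : ℂ) • (1 + ((-1 : ℂ)) ^ k • ((ν : ℂ) • pauli (σ 2))) =
      1 + ((((-1) ^ j * ν * p / 2 : ℝ) : ℂ) • pauli (σ 0)
        + (((-1) ^ j * ν * (s * (1 - p)) / 2 : ℝ) : ℂ) • pauli (σ 1)
        + (((-1) ^ k * ν / 2 : ℝ) : ℂ) • pauli (σ 2)) := by
    push_cast
    module
  have hsign (m : ℕ) : ((-1 : ℝ) ^ m) ^ 2 = 1 := by
    rw [← pow_mul, mul_comm, pow_mul]; norm_num
  rw [hmat, opNorm_one_add_pauli_comb _ _ _ (σ.injective.ne (by decide))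
    (σ.injective.ne (by decide)) (σ.injective.ne (by decide))]
  congr 2
  linear_combination (ν ^ 2 * p ^ 2 / 4 + ν ^ 2 * (s * (1 - p)) ^ 2 / 4) * hsign j
    + ν ^ 2 / 4 * hsign k

lemma rac_sum_eq (ν p s : ℝ) (σ : Equiv.Perm (Fin 3)) :
    ∑ j : Fin 2, ∑ k : Fin 2,
      opNorm ((1/2 : ℂ) • (1 + ((-1 : ℂ)) ^ (j : ℕ) •
          ((ν : ℂ) • ((p : ℂ) • pauli (σ 0) + ((s * (1 - p) : ℝ) : ℂ) • pauli (σ 1)))) +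
        (1/2 : ℂ) • (1 + ((-1 : ℂ)) ^ (k : ℕ) • ((ν : ℂ) • pauli (σ 2)))) =
      4 * (1 + √(ν ^ 2 * (p ^ 2 + (s * (1 - p)) ^ 2 + 1) / 4)) := by
  simp only [Fin.sum_univ_two, opNorm_rac_term]
  ring

lemma sqrt_two_thirds_lt_iff {ν : ℝ} (hν : 0 ≤ ν) :
    √(2 / 3) < ν ↔
      ∀ p ∈ Set.Icc (0 : ℝ) 1, 6 < 4 * (1 + √(ν ^ 2 * (p ^ 2 + (1 - p) ^ 2 + 1) / 4)) := by
  have hsqrt (x : ℝ) : 6 < 4 * (1 + √(x / 4)) ↔ 1 < x := by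
    rw [show 6 < 4 * (1 + √(x / 4)) ↔ 1 / 2 < √(x / 4) by constructor <;> intro h <;> linarith,
      Real.lt_sqrt (by norm_num)]
    constructor <;> intro h <;> linarith
  simp only [hsqrt]
  rw [Real.sqrt_lt (by norm_num) hν]
  constructor
  · intro h p _
    nlinarith [sq_nonneg (2 * p - 1)]
  · intro h
    have := h (1 / 2) ⟨by norm_num, by norm_num⟩
    linarith

/-- The three noisy Pauli measurements with equal noise `ν` are witnessed, via a quantum
advantage in the `(2,2,2)` random access code for every disjoint-convex-mixing (every weight
`p`, every permutation `(A,B,C)` of the Pauli matrices and every outcome pairing `s`), to be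
fully incompatible w.r.t. disjoint-convex-mixing iff `ν > √(2/3)`. -/
theorem rac_witness_noisy_pauli_iff
    (ν : ℝ) (hν : ν ∈ Set.Icc (0 : ℝ) 1) :
    ν > Real.sqrt (2 / 3) ↔
    (∀ p ∈ Set.Icc (0 : ℝ) 1, ∀ σ : Equiv.Perm (Fin 3), ∀ s ∈ ({1, -1} : Set ℝ),
      ∑ j : Fin 2, ∑ k : Fin 2,
        opNorm ((1/2 : ℂ) • (1 + ((-1 : ℂ)) ^ (j : ℕ) •
            ((ν : ℂ) • ((p : ℂ) • pauli (σ 0) + ((s * (1 - p) : ℝ) : ℂ) • pauli (σ 1)))) +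
          (1/2 : ℂ) • (1 + ((-1 : ℂ)) ^ (k : ℕ) • ((ν : ℂ) • pauli (σ 2))))
        > 6) := by
  simp only [gt_iff_lt, rac_sum_eq, Set.mem_insert_iff, Set.mem_singleton_iff,
    forall_eq_or_imp, forall_eq, one_mul, neg_one_mul, neg_sq, and_self, forall_const]
  exact sqrt_two_thirds_lt_iff hν.1
end
end
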